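/- Let α > 1. There exists C > 0 depending only on α such that for every t > 0 and every family (a_r)_{r∈[0,t]} of functions a_r : ℤ² → ℂ with a_r(0) = 0, such that r ↦ a_r(m) is continuous on [0,t] for every m and sup_{r∈[0,t]} ∑_{m∈ℤ²∖{0}} |m|^{−2α}|a_r(m)|² < ∞, one has: ∫₀ᵗ ∑_{k∈ℤ²∖{0}} |k|^{−2α} ( ∫ₛᵗ (t−r)^{−1/2} ( ∑_{ℓ∈ℤ²∖{0}} |ℓ|^{−2α}|a_r(ℓ−k)|² )^{1/2} dr )² ds ≤ C t² sup_{r∈[0,t]} ∑_{m∈ℤ²∖{0}} |m|^{−2α}|a_r(m)|². -/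

import Mathlib

/-!
Write `w k = |k|^{-2α}` and `σ_k b = b(· - k)`. Since `m = (m + k) - k`, one of `|k|`, `|m + k|`
is at least `|m| / 2`, so `∑_k w k w (m + k) ≤ c w m` for `m ≠ 0`, with `c = 2 · 4^α ∑ w` finite
because `2α > 2`. Substituting `ℓ = m + k` turns this into
`∑_k w k ‖σ_k a_r‖²_{H^{-α}} ≤ c ‖a_r‖²_{H^{-α}}`, using `a_r 0 = 0`.
For fixed `s`, Cauchy–Schwarz against the kernel `(t - r)^{-1/2}`, whose integral over `(s, t]`
is `2 √(t - s)`, bounds the `k`-th term by `w k · 2 √(t - s) ∫ (t - r)^{-1/2} ‖σ_k a_r‖² dr`;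
summing over `k` gives at most `4 (t - s) c sup_r ‖a_r‖²`, and integrating over `s ∈ (0, t]`
gives the factor `t²`.
-/

open scoped ENNReal
open MeasureTheory intervalIntegral

/-- Squared Euclidean norm of a lattice point `k ∈ ℤ²`. -/
noncomputable def nsq (k : ℤ × ℤ) : ℝ := (k.1 : ℝ) ^ 2 + (k.2 : ℝ) ^ 2

lemma nsq_nonneg (k : ℤ × ℤ) : 0 ≤ nsq k := by unfold nsq; positivity

lemma nsq_zero : nsq 0 = 0 := by simp [nsq]

lemma one_le_nsq {k : ℤ × ℤ} (hk : k ≠ 0) : 1 ≤ nsq k := by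
  have h : k.1 ≠ 0 ∨ k.2 ≠ 0 := by
    by_contra! h
    exact hk (Prod.ext h.1 h.2)
  have key : (1 : ℤ) ≤ k.1 ^ 2 + k.2 ^ 2 := by
    rcases h with h | h <;>
      nlinarith [(one_le_sq_iff_one_le_abs _).mpr (Int.one_le_abs h), sq_nonneg k.1, sq_nonneg k.2]
  unfold nsq
  exact_mod_cast key

lemma nsq_sub_le (k l : ℤ × ℤ) : nsq (k - l) ≤ 2 * (nsq k + nsq l) := by
  simp only [nsq, Prod.fst_sub, Prod.snd_sub, Int.cast_sub]
  nlinarith [sq_nonneg ((k.1 : ℝ) + l.1), sq_nonneg ((k.2 : ℝ) + l.2)]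

lemma nsq_rpow_neg_le_of_le {α : ℝ} (hα : 0 ≤ α) {k l : ℤ × ℤ} (hk : k ≠ 0)
    (h : nsq k ≤ 4 * nsq l) : nsq l ^ (-α) ≤ 4 ^ α * nsq k ^ (-α) := by
  have hk4 : 0 < nsq k / 4 := by linarith [one_le_nsq hk]
  calc nsq l ^ (-α) ≤ (nsq k / 4) ^ (-α) :=
        Real.rpow_le_rpow_of_nonpos hk4 (by linarith) (by linarith)
    _ = 4 ^ α * nsq k ^ (-α) := by
        rw [Real.div_rpow (nsq_nonneg k) (by norm_num), Real.rpow_neg (by norm_num : (0:ℝ) ≤ 4),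
          div_inv_eq_mul, mul_comm]

lemma summable_nsq_rpow_neg {α : ℝ} (hα : 1 < α) : Summable fun k : ℤ × ℤ => nsq k ^ (-α) := by
  have hsup : Summable fun k : ℤ × ℤ => ‖![k.1, k.2]‖ ^ (-(2 * α)) :=
    (finTwoArrowEquiv ℤ).symm.summable_iff.mpr
      (EisensteinSeries.summable_one_div_norm_rpow (by linarith))
  refine hsup.of_nonneg_of_le (fun k => Real.rpow_nonneg (nsq_nonneg k) _) fun k => ?_
  rcases eq_or_ne k 0 with rfl | hk
  · rw [nsq_zero, Real.zero_rpow (by linarith)]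
    positivity
  have hnorm : ‖![k.1, k.2]‖ ≤ √(nsq k) := by
    refine (pi_norm_le_iff_of_nonneg (Real.sqrt_nonneg _)).mpr fun i => ?_
    fin_cases i <;> simp only [Int.norm_eq_abs] <;> refine Real.abs_le_sqrt ?_ <;>
      simp [nsq, sq_nonneg]
  have hpos : 0 < ‖![k.1, k.2]‖ :=
    norm_pos_iff.mpr (by simpa [funext_iff, Fin.forall_fin_two, Prod.ext_iff] using hk)
  calc nsq k ^ (-α) = (√(nsq k) ^ 2) ^ (-α) := by rw [Real.sq_sqrt (nsq_nonneg k)]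
    _ ≤ (‖![k.1, k.2]‖ ^ 2) ^ (-α) :=
        Real.rpow_le_rpow_of_nonpos (by positivity) (by gcongr) (by linarith)
    _ = ‖![k.1, k.2]‖ ^ (-(2 * α)) := by
        rw [← Real.rpow_natCast, ← Real.rpow_mul (norm_nonneg _)]; norm_num

lemma nsq_rpow_neg_mul_le {α : ℝ} (hα : 0 ≤ α) {m : ℤ × ℤ} (hm : m ≠ 0) (k : ℤ × ℤ) :
    nsq k ^ (-α) * nsq (m + k) ^ (-α) ≤
      4 ^ α * nsq m ^ (-α) * (nsq k ^ (-α) + nsq (m + k) ^ (-α)) := by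
  have hsplit := nsq_sub_le (m + k) k
  rw [add_sub_cancel_right] at hsplit
  have hk := Real.rpow_nonneg (nsq_nonneg k) (-α)
  have hmk := Real.rpow_nonneg (nsq_nonneg (m + k)) (-α)
  by_cases h : nsq m ≤ 4 * nsq k
  · have := nsq_rpow_neg_le_of_le hα hm h
    nlinarith
  · have := nsq_rpow_neg_le_of_le hα hm (show nsq m ≤ 4 * nsq (m + k) by linarith)
    nlinarith

lemma exists_tsum_nsq_rpow_neg_mul_le {α : ℝ} (hα : 1 < α) :
    ∃ c : ℝ, 0 < c ∧ ∀ m ≠ 0,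
      ∑' k, ENNReal.ofReal (nsq k ^ (-α)) * ENNReal.ofReal (nsq (m + k) ^ (-α)) ≤
        ENNReal.ofReal c * ENNReal.ofReal (nsq m ^ (-α)) := by
  have hw : ∀ k, 0 ≤ nsq k ^ (-α) := fun k => Real.rpow_nonneg (nsq_nonneg k) _
  have hsum := summable_nsq_rpow_neg hα
  set Z := ∑' k, nsq k ^ (-α)
  have hZ : 1 ≤ Z := by
    have h10 : nsq (1, 0) ^ (-α) = 1 := by simp [nsq]
    exact h10 ▸ hsum.le_tsum (1, 0) fun k _ => hw k
  refine ⟨2 * 4 ^ α * Z, by positivity, fun m hm => ?_⟩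
  have htsum : ∑' k, ENNReal.ofReal (nsq k ^ (-α)) = ENNReal.ofReal Z :=
    (ENNReal.ofReal_tsum_of_nonneg hw hsum).symm
  have hshift : ∑' k, ENNReal.ofReal (nsq (m + k) ^ (-α)) = ENNReal.ofReal Z :=
    ((Equiv.addLeft m).tsum_eq fun k => ENNReal.ofReal (nsq k ^ (-α))).trans htsum
  calc ∑' k, ENNReal.ofReal (nsq k ^ (-α)) * ENNReal.ofReal (nsq (m + k) ^ (-α))
      ≤ ∑' k, ENNReal.ofReal (4 ^ α * nsq m ^ (-α)) *
          (ENNReal.ofReal (nsq k ^ (-α)) + ENNReal.ofReal (nsq (m + k) ^ (-α))) :=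
        ENNReal.tsum_le_tsum fun k => by
          rw [← ENNReal.ofReal_mul (hw k), ← ENNReal.ofReal_add (hw k) (hw _),
            ← ENNReal.ofReal_mul (mul_nonneg (by positivity) (hw m))]
          exact ENNReal.ofReal_le_ofReal (nsq_rpow_neg_mul_le (by linarith) hm k)
    _ = ENNReal.ofReal (4 ^ α * nsq m ^ (-α)) * (ENNReal.ofReal Z + ENNReal.ofReal Z) := by
        rw [ENNReal.tsum_mul_left, ENNReal.tsum_add, htsum, hshift]
    _ = ENNReal.ofReal (2 * 4 ^ α * Z) * ENNReal.ofReal (nsq m ^ (-α)) := by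
        rw [← ENNReal.ofReal_add (by positivity) (by positivity),
          ← ENNReal.ofReal_mul (mul_nonneg (by positivity) (hw m)), ← ENNReal.ofReal_mul (by positivity)]
        congr 1
        ring

theorem tsum_mul_tsum_sub_le {G : Type*} [AddGroup G] {w b : G → ℝ≥0∞} {c : ℝ≥0∞}
    (hw : ∀ m ≠ 0, ∑' k, w k * w (m + k) ≤ c * w m) (hb : b 0 = 0) :
    ∑' k, w k * ∑' l, w l * b (l - k) ≤ c * ∑' m, w m * b m :=
  calc ∑' k, w k * ∑' l, w l * b (l - k) = ∑' k, ∑' m, w k * w (m + k) * b m := by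
        refine tsum_congr fun k => ?_
        rw [← ENNReal.tsum_mul_left, ← (Equiv.addRight k).tsum_eq]
        simp [mul_assoc]
    _ = ∑' m, (∑' k, w k * w (m + k)) * b m := by
        rw [ENNReal.tsum_comm]
        simp_rw [ENNReal.tsum_mul_right]
    _ ≤ ∑' m, c * w m * b m := ENNReal.tsum_le_tsum fun m => by
        rcases eq_or_ne m 0 with rfl | hm
        · simp [hb]
        · gcongr
          exact hw m hm
    _ = c * ∑' m, w m * b m := by
        rw [← ENNReal.tsum_mul_left]
        simp_rw [mul_assoc]

/-- `‖ψ‖²_{H^{-α}}` for the distribution `ψ` on `𝕋²` with Fourier coefficients `b`; the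
coefficients of `e_k ψ` are `fun m => b (m - k)`. -/
noncomputable def negSobolevSq (α : ℝ) (b : ℤ × ℤ → ℂ) : ℝ≥0∞ :=
  ∑' m, if m ≠ 0 then ENNReal.ofReal (nsq m ^ (-α) * ‖b m‖ ^ 2) else 0

lemma negSobolevSq_eq_tsum {α : ℝ} (hα : α ≠ 0) (b : ℤ × ℤ → ℂ) :
    negSobolevSq α b = ∑' m, ENNReal.ofReal (nsq m ^ (-α)) * ENNReal.ofReal (‖b m‖ ^ 2) := by
  refine tsum_congr fun m => ?_
  rcases eq_or_ne m 0 with rfl | hm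
  · simp [nsq_zero, Real.zero_rpow (neg_ne_zero.mpr hα)]
  · rw [if_pos hm, ENNReal.ofReal_mul (Real.rpow_nonneg (nsq_nonneg m) _)]

lemma tsum_mul_negSobolevSq_sub_le {α c : ℝ} (hα : α ≠ 0)
    (hc : ∀ m ≠ 0, ∑' k, ENNReal.ofReal (nsq k ^ (-α)) * ENNReal.ofReal (nsq (m + k) ^ (-α)) ≤
      ENNReal.ofReal c * ENNReal.ofReal (nsq m ^ (-α)))
    {b : ℤ × ℤ → ℂ} (hb : b 0 = 0) :
    ∑' k, ENNReal.ofReal (nsq k ^ (-α)) * negSobolevSq α (fun m => b (m - k)) ≤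
      ENNReal.ofReal c * negSobolevSq α b := by
  simp only [negSobolevSq_eq_tsum hα]
  exact tsum_mul_tsum_sub_le hc (by simp [hb])

lemma ofReal_tsum_le_tsum_ofReal {ι : Type*} {f : ι → ℝ} (hf : ∀ i, 0 ≤ f i) :
    ENNReal.ofReal (∑' i, f i) ≤ ∑' i, ENNReal.ofReal (f i) := by
  by_cases h : Summable f
  · exact (ENNReal.ofReal_tsum_of_nonneg hf h).le
  · simp [tsum_eq_zero_of_not_summable h]

lemma ofReal_tsum_le_negSobolevSq (α : ℝ) (b : ℤ × ℤ → ℂ) :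
    ENNReal.ofReal (∑' m, if m ≠ 0 then nsq m ^ (-α) * ‖b m‖ ^ 2 else 0) ≤ negSobolevSq α b := by
  refine (ofReal_tsum_le_tsum_ofReal fun m => ?_).trans_eq (tsum_congr fun m => ?_)
  · split_ifs
    exacts [mul_nonneg (Real.rpow_nonneg (nsq_nonneg m) _) (by positivity), le_rfl]
  · split_ifs <;> simp

lemma aemeasurable_negSobolevSq {X : Type*} [TopologicalSpace X] [MeasurableSpace X]
    [OpensMeasurableSpace X] {μ : Measure X} {s : Set X} (hs : MeasurableSet s)
    {b : X → ℤ × ℤ → ℂ} (hb : ∀ m, ContinuousOn (fun x => b x m) s) (α : ℝ) :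
    AEMeasurable (fun x => negSobolevSq α (b x)) (μ.restrict s) := by
  refine AEMeasurable.tsum fun m => ?_
  by_cases hm : m = 0
  · simp [hm]
  · simp only [ne_eq, hm, not_false_eq_true, if_true]
    exact ENNReal.measurable_ofReal.comp_aemeasurable
      ((continuousOn_const.mul ((hb m).norm.pow 2)).aemeasurable hs)

lemma lintegral_Ioc_ofReal_sub_rpow_neg_half {s t : ℝ} (hst : s ≤ t) :
    ∫⁻ r in Set.Ioc s t, ENNReal.ofReal ((t - r) ^ (-(1 / 2) : ℝ)) =
      ENNReal.ofReal (2 * √(t - s)) := by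
  have hint : IntervalIntegrable (fun r => (t - r) ^ (-(1 / 2) : ℝ)) volume s t := by
    simpa using ((intervalIntegral.intervalIntegrable_rpow' (by norm_num : (-1 : ℝ) < -(1 / 2))
      (a := 0) (b := t - s)).comp_sub_left t).symm
  rw [← ofReal_integral_eq_lintegral_ofReal
    ((intervalIntegrable_iff_integrableOn_Ioc_of_le hst).mp hint)
    ((ae_restrict_iff' measurableSet_Ioc).mpr
      (Filter.Eventually.of_forall fun r hr => Real.rpow_nonneg (by linarith [hr.2]) _)),
    ← intervalIntegral.integral_of_le hst, intervalIntegral.integral_comp_sub_left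
      (fun x : ℝ => x ^ (-(1 / 2) : ℝ)), sub_self,
    integral_rpow (Or.inl (by norm_num : (-1 : ℝ) < -(1 / 2))), Real.sqrt_eq_rpow]
  congr 1
  norm_num
  ring

lemma lintegral_mul_rpow_half_sq_le {X : Type*} [MeasurableSpace X] (μ : Measure X)
    {f g : X → ℝ≥0∞} (hf : AEMeasurable f μ) (hg : AEMeasurable g μ) :
    (∫⁻ x, f x * g x ^ (1 / 2 : ℝ) ∂μ) ^ 2 ≤ (∫⁻ x, f x ∂μ) * ∫⁻ x, f x * g x ∂μ := by
  have hH := ENNReal.lintegral_mul_le_Lp_mul_Lq μ Real.HolderConjugate.two_two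
    (hf.pow_const (1 / 2 : ℝ)) ((hf.mul hg).pow_const (1 / 2 : ℝ))
  simp only [Pi.mul_apply, ← ENNReal.rpow_mul] at hH
  norm_num at hH
  have hsq : ∀ x : ℝ≥0∞, (x ^ (1 / 2 : ℝ)) ^ 2 = x := fun x => by
    rw [← ENNReal.rpow_natCast, ← ENNReal.rpow_mul]
    norm_num
  have hsplit : ∀ x, f x * g x ^ (1 / 2 : ℝ) = f x ^ (1 / 2 : ℝ) * (f x * g x) ^ (1 / 2 : ℝ) :=
    fun x => by
      rw [ENNReal.mul_rpow_of_nonneg _ _ (by norm_num), ← mul_assoc,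
        ← ENNReal.rpow_add_of_nonneg _ _ (by norm_num) (by norm_num)]
      norm_num
  simp_rw [hsplit]
  calc _ ≤ ((∫⁻ x, f x ∂μ) ^ (1 / 2 : ℝ) * (∫⁻ x, f x * g x ∂μ) ^ (1 / 2 : ℝ)) ^ 2 := by gcongr
    _ = _ := by rw [mul_pow, hsq, hsq]

lemma ofReal_integral_le_lintegral_ofReal {X : Type*} [MeasurableSpace X] {μ : Measure X}
    {f : X → ℝ} (hf : 0 ≤ᵐ[μ] f) :
    ENNReal.ofReal (∫ x, f x ∂μ) ≤ ∫⁻ x, ENNReal.ofReal (f x) ∂μ := by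
  by_cases hint : Integrable f μ
  · exact (ofReal_integral_eq_lintegral_ofReal hint hf).le
  · simp [integral_undef hint]

lemma ofReal_sqrt_eq_rpow (y : ℝ) : ENNReal.ofReal √y = ENNReal.ofReal y ^ (1 / 2 : ℝ) := by
  rcases le_or_gt y 0 with hy | hy
  · simp [Real.sqrt_eq_zero'.mpr hy, ENNReal.ofReal_of_nonpos hy]
  · rw [Real.sqrt_eq_rpow, ENNReal.ofReal_rpow_of_nonneg hy.le (by norm_num)]

theorem ofReal_sq_integral_mul_sqrt_le {X : Type*} [MeasurableSpace X] {μ : Measure X}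
    {κ f : X → ℝ} {g : X → ℝ≥0∞} (hκ : 0 ≤ᵐ[μ] κ) (hκm : AEMeasurable κ μ)
    (hg : AEMeasurable g μ) (hfg : ∀ x, ENNReal.ofReal (f x) ≤ g x) :
    ENNReal.ofReal ((∫ x, κ x * √(f x) ∂μ) ^ 2) ≤
      (∫⁻ x, ENNReal.ofReal (κ x) ∂μ) * ∫⁻ x, ENNReal.ofReal (κ x) * g x ∂μ := by
  have hnn : 0 ≤ᵐ[μ] fun x => κ x * √(f x) :=
    hκ.mono fun x hx => mul_nonneg hx (Real.sqrt_nonneg _)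
  rw [ENNReal.ofReal_pow (integral_nonneg_of_ae hnn)]
  calc ENNReal.ofReal (∫ x, κ x * √(f x) ∂μ) ^ 2
      ≤ (∫⁻ x, ENNReal.ofReal (κ x) * g x ^ (1 / 2 : ℝ) ∂μ) ^ 2 := by
        gcongr
        refine (ofReal_integral_le_lintegral_ofReal hnn).trans (lintegral_mono fun x => ?_)
        rw [ENNReal.ofReal_mul' (Real.sqrt_nonneg _), ofReal_sqrt_eq_rpow]
        gcongr
        exact hfg x
    _ ≤ _ := lintegral_mul_rpow_half_sq_le μ hκm.ennreal_ofReal hg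

lemma tsum_mul_lintegral_mul {X ι : Type*} [MeasurableSpace X] [Countable ι] {μ : Measure X}
    (w : ι → ℝ≥0∞) {K : X → ℝ≥0∞} {G : ι → X → ℝ≥0∞} (hK : AEMeasurable K μ)
    (hG : ∀ k, AEMeasurable (G k) μ) :
    ∑' k, w k * ∫⁻ x, K x * G k x ∂μ = ∫⁻ x, K x * ∑' k, w k * G k x ∂μ :=
  calc ∑' k, w k * ∫⁻ x, K x * G k x ∂μ = ∑' k, ∫⁻ x, w k * (K x * G k x) ∂μ :=
        tsum_congr fun k => (lintegral_const_mul'' _ (hK.mul (hG k))).symm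
    _ = ∫⁻ x, ∑' k, w k * (K x * G k x) ∂μ :=
        (lintegral_tsum fun k => (hK.mul (hG k)).const_mul _).symm
    _ = ∫⁻ x, K x * ∑' k, w k * G k x ∂μ := by
        simp_rw [mul_left_comm (w _), ENNReal.tsum_mul_left]

lemma ofReal_sq_kernel_integral_le {α s t : ℝ} (hst : s ≤ t) {a : ℝ → ℤ × ℤ → ℂ}
    {k : ℤ × ℤ} (hG : AEMeasurable (fun r => negSobolevSq α fun m => a r (m - k))
      (volume.restrict (Set.Ioc s t))) :
    ENNReal.ofReal ((∫ r in s..t, (t - r) ^ (-(1 / 2) : ℝ) *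
        √(∑' ℓ : ℤ × ℤ, if ℓ ≠ 0 then nsq ℓ ^ (-α) * ‖a r (ℓ - k)‖ ^ 2 else 0)) ^ 2) ≤
      ENNReal.ofReal (2 * √(t - s)) * ∫⁻ r in Set.Ioc s t,
        ENNReal.ofReal ((t - r) ^ (-(1 / 2) : ℝ)) * negSobolevSq α fun m => a r (m - k) := by
  rw [intervalIntegral.integral_of_le hst, ← lintegral_Ioc_ofReal_sub_rpow_neg_half hst]
  exact ofReal_sq_integral_mul_sqrt_le
    ((ae_restrict_iff' measurableSet_Ioc).mpr
      (Filter.Eventually.of_forall fun r hr => Real.rpow_nonneg (by linarith [hr.2]) _))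
    (by fun_prop) hG fun r => ofReal_tsum_le_negSobolevSq α _

theorem tsum_weighted_sq_kernel_integral_le {α c t s : ℝ} (hα : α ≠ 0) (hc0 : 0 ≤ c)
    (hc : ∀ m ≠ 0, ∑' k, ENNReal.ofReal (nsq k ^ (-α)) * ENNReal.ofReal (nsq (m + k) ^ (-α)) ≤
      ENNReal.ofReal c * ENNReal.ofReal (nsq m ^ (-α)))
    {a : ℝ → ℤ × ℤ → ℂ} (ha0 : ∀ r ∈ Set.Icc (0 : ℝ) t, a r 0 = 0)
    (hcont : ∀ m, ContinuousOn (fun r => a r m) (Set.Icc 0 t)) (hs : s ∈ Set.Ioc 0 t) :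
    ∑' k : ℤ × ℤ,
        (if k ≠ 0 then
          ENNReal.ofReal ((nsq k) ^ (-α) *
            (∫ r in s..t, (t - r) ^ (-(1 / 2) : ℝ) *
              Real.sqrt (∑' ℓ : ℤ × ℤ,
                if ℓ ≠ 0 then (nsq ℓ) ^ (-α) * ‖a r (ℓ - k)‖ ^ 2 else 0)) ^ 2)
        else 0) ≤
      ENNReal.ofReal (4 * c * t) * ⨆ r ∈ Set.Icc (0 : ℝ) t, negSobolevSq α (a r) := by
  obtain ⟨hs0, hst⟩ := hs
  set S := ⨆ r ∈ Set.Icc (0 : ℝ) t, negSobolevSq α (a r)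
  set E := ENNReal.ofReal (2 * √(t - s))
  set K : ℝ → ℝ≥0∞ := fun r => ENNReal.ofReal ((t - r) ^ (-(1 / 2) : ℝ))
  set G : ℤ × ℤ → ℝ → ℝ≥0∞ := fun k r => negSobolevSq α fun m => a r (m - k)
  have hsub : Set.Ioc s t ⊆ Set.Icc 0 t :=
    Set.Ioc_subset_Icc_self.trans (Set.Icc_subset_Icc_left hs0.le)
  have hK : Measurable K := by fun_prop
  have hG : ∀ k, AEMeasurable (G k) (volume.restrict (Set.Ioc s t)) := fun k =>
    aemeasurable_negSobolevSq measurableSet_Ioc (fun m => (hcont (m - k)).mono hsub) α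
  have hshift : ∀ r ∈ Set.Ioc s t,
      ∑' k, ENNReal.ofReal (nsq k ^ (-α)) * G k r ≤ ENNReal.ofReal c * S := fun r hr =>
    (tsum_mul_negSobolevSq_sub_le hα hc (ha0 r (hsub hr))).trans
      (by gcongr; exact le_biSup (fun r => negSobolevSq α (a r)) (hsub hr))
  have hsqrt : 2 * √(t - s) * (2 * √(t - s)) = 4 * (t - s) := by
    rw [mul_mul_mul_comm, Real.mul_self_sqrt (sub_nonneg.mpr hst)]
    ring
  calc _ ≤ ∑' k, ENNReal.ofReal (nsq k ^ (-α)) * (E * ∫⁻ r in Set.Ioc s t, K r * G k r) :=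
        ENNReal.tsum_le_tsum fun k => by
          split_ifs
          · rw [ENNReal.ofReal_mul (Real.rpow_nonneg (nsq_nonneg k) _)]
            gcongr
            exact ofReal_sq_kernel_integral_le hst (hG k)
          · exact zero_le
    _ = E * ∫⁻ r in Set.Ioc s t, K r * ∑' k, ENNReal.ofReal (nsq k ^ (-α)) * G k r := by
        simp_rw [mul_left_comm _ E]
        rw [ENNReal.tsum_mul_left, tsum_mul_lintegral_mul _ hK.aemeasurable hG]
    _ ≤ E * ∫⁻ r in Set.Ioc s t, K r * (ENNReal.ofReal c * S) := by
        gcongr 1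
        exact setLIntegral_mono (hK.mul_const _) fun r hr => by gcongr; exact hshift r hr
    _ = ENNReal.ofReal (4 * (t - s) * c) * S := by
        rw [lintegral_mul_const _ hK, lintegral_Ioc_ofReal_sub_rpow_neg_half hst, ← mul_assoc,
          ← ENNReal.ofReal_mul (by positivity), hsqrt, ← mul_assoc,
          ← ENNReal.ofReal_mul (by linarith)]
    _ ≤ ENNReal.ofReal (4 * c * t) * S := by
        gcongr ENNReal.ofReal ?_ * S
        nlinarith

/-- Deterministic core of the second bound of Lemma 4.3: for `α > 1` there is `C > 0` such that
for all `t > 0` and all families `(a_r)_{r∈[0,t]}` of Fourier data with `a_r 0 = 0`,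
`r ↦ a_r m` continuous and `sup_{r∈[0,t]} ∑_{m≠0} |m|^{−2α}|a_r m|² < ∞`,
`∫₀ᵗ ∑_{k≠0} |k|^{−2α} (∫ₛᵗ (t−r)^{−1/2} (∑_{ℓ≠0} |ℓ|^{−2α}|a_r(ℓ−k)|²)^{1/2} dr)² ds
  ≤ C t² sup_{r∈[0,t]} ∑_{m≠0} |m|^{−2α}|a_r m|²`. -/
theorem schauder_gaussian_bound (α : ℝ) (hα : 1 < α) :
    ∃ C : ℝ, 0 < C ∧ ∀ t : ℝ, 0 < t → ∀ a : ℝ → (ℤ × ℤ) → ℂ,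
      (∀ r ∈ Set.Icc (0 : ℝ) t, a r 0 = 0) →
      (∀ m : ℤ × ℤ, ContinuousOn (fun r => a r m) (Set.Icc 0 t)) →
      (⨆ r ∈ Set.Icc (0 : ℝ) t, ∑' m : ℤ × ℤ,
          (if m ≠ 0 then ENNReal.ofReal ((nsq m) ^ (-α) * ‖a r m‖ ^ 2) else 0)) < ⊤ →
      (∫⁻ s in Set.Ioc (0 : ℝ) t, ∑' k : ℤ × ℤ,
          (if k ≠ 0 then
            ENNReal.ofReal ((nsq k) ^ (-α) *
              (∫ r in s..t, (t - r) ^ (-(1 / 2) : ℝ) *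
                Real.sqrt (∑' ℓ : ℤ × ℤ,
                  if ℓ ≠ 0 then (nsq ℓ) ^ (-α) * ‖a r (ℓ - k)‖ ^ 2 else 0)) ^ 2)
          else 0)) ≤
        ENNReal.ofReal (C * t ^ 2) *
          ⨆ r ∈ Set.Icc (0 : ℝ) t, ∑' m : ℤ × ℤ,
            (if m ≠ 0 then ENNReal.ofReal ((nsq m) ^ (-α) * ‖a r m‖ ^ 2) else 0) := by
  obtain ⟨c, hc0, hc⟩ := exists_tsum_nsq_rpow_neg_mul_le hα
  refine ⟨4 * c, by positivity, fun t ht a ha0 hcont _ => ?_⟩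
  calc _ ≤ ∫⁻ _ in Set.Ioc (0 : ℝ) t,
          ENNReal.ofReal (4 * c * t) * ⨆ r ∈ Set.Icc (0 : ℝ) t, negSobolevSq α (a r) :=
        setLIntegral_mono measurable_const fun s hs =>
          tsum_weighted_sq_kernel_integral_le (by linarith) hc0.le hc ha0 hcont hs
    _ = _ := by
        rw [setLIntegral_const, Real.volume_Ioc, sub_zero, mul_right_comm,
          ← ENNReal.ofReal_mul (by positivity)]
        congr 2
        ring
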